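/- arXiv:1912.08879 — 2 statements merged into one kernel-verified Lean document; each statement's English description precedes it below -/
import Mathlib

section
/- Let N ≥ 2 and m = ⌊N/2⌋. Define the skew-symmetric N × N complex matrix W(z) built from 2×2 diagonal blocks ((0, z_j), (−z_j, 0)) for j = 1,…,m (with a final zero row and column if N is odd). Then det(I_N + \bar W(z)ᵀ W(z)) = Π_{j=1}^m (1 + |z_j|²)². Hence log det(I_N + \bar W(z)ᵀ W(z)) = 2 Σ_{j=1}^m log(1 + |z_j|²), so z ↦ W(z) pulls back the Kähler–Einstein potential of SO(2N)/U(N) to twice the product Fubini–Study potential of (ℂP¹)^m. -/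
/-!
Column `i` of `W(z)` has a single possibly nonzero entry, `±z_{⌊i/2⌋}`, in the row paired with
`i` (none for the last index when `N` is odd), so `W̄ᵀW` is diagonal with entries `|z_{⌊i/2⌋}|²`.
Each `|z_j|²` occurs twice on that diagonal, whence `det(I + W̄ᵀW) = ∏ (1 + |z_j|²)²`, a positive
real number whose logarithm is `2 ∑ log(1 + |z_j|²)`.
-/

open scoped Matrix

/-- The skew-symmetric `N × N` matrix built from `2 × 2` diagonal blocks
`((0, z_j), (−z_j, 0))`, `j = 1, …, ⌊N/2⌋` (with a final zero row and column if `N` is odd),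
giving the embedding of `ℂ^{⌊N/2⌋}` into the Alekseevsky–Perelomov coordinates of
`SO(2N)/U(N)`. -/
noncomputable def Wso (N : ℕ) (z : Fin (N / 2) → ℂ) : Matrix (Fin N) (Fin N) ℂ :=
  Matrix.of fun i j =>
    if h : (i : ℕ) % 2 = 0 ∧ (i : ℕ) + 1 = (j : ℕ) then
      z ⟨(i : ℕ) / 2, by have hi := i.isLt; have hj := j.isLt; omega⟩
    else if h' : (j : ℕ) % 2 = 0 ∧ (j : ℕ) + 1 = (i : ℕ) then
      -z ⟨(j : ℕ) / 2, by have hi := i.isLt; have hj := j.isLt; omega⟩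
    else 0

theorem Finset.prod_range_div_two {M : Type*} [CommMonoid M] (f : ℕ → M) (n : ℕ) :
    ∏ i ∈ Finset.range n, f (i / 2) =
      (∏ j ∈ Finset.range (n / 2), f j ^ 2) * f (n / 2) ^ (n % 2) := by
  induction n with
  | zero => simp
  | succ n ih =>
    rw [Finset.prod_range_succ, ih]
    rcases Nat.even_or_odd' n with ⟨k, rfl | rfl⟩
    · rw [show (2 * k + 1) / 2 = k by omega, show 2 * k / 2 = k by omega,
        show (2 * k + 1) % 2 = 1 by omega, show 2 * k % 2 = 0 by omega]
      simp
    · rw [show (2 * k + 1 + 1) / 2 = k + 1 by omega, show (2 * k + 1) / 2 = k by omega,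
        show (2 * k + 1 + 1) % 2 = 0 by omega, show (2 * k + 1) % 2 = 1 by omega,
        Finset.prod_range_succ]
      simp only [pow_zero, pow_one, mul_one, sq, mul_assoc]

noncomputable def padNormSq {m : ℕ} (z : Fin m → ℂ) (n : ℕ) : ℝ :=
  if h : n < m then Complex.normSq (z ⟨n, h⟩) else 0

theorem padNormSq_of_le {m n : ℕ} (z : Fin m → ℂ) (h : m ≤ n) : padNormSq z n = 0 :=
  dif_neg h.not_gt

theorem transpose_Wso (N : ℕ) (z : Fin (N / 2) → ℂ) : (Wso N z)ᵀ = -Wso N z := by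
  ext i j
  simp only [Matrix.transpose_apply, Matrix.neg_apply, Wso, Matrix.of_apply]
  split_ifs <;> first | omega | simp

theorem star_Wso_mul_Wso (N : ℕ) (z : Fin (N / 2) → ℂ) (i k j : Fin N) :
    star (Wso N z j i) * Wso N z j k =
      if i = k ∧ (j : ℕ) = (if (i : ℕ) % 2 = 0 then (i : ℕ) + 1 else (i : ℕ) - 1) then
        (padNormSq z ((i : ℕ) / 2) : ℂ) else 0 := by
  simp only [Wso, padNormSq, Matrix.of_apply, Fin.ext_iff]
  split_ifs <;> first
    | omega
    | (simp; done)
    | (simp only [Complex.normSq_eq_conj_mul_self, Complex.star_def, map_neg, neg_mul_neg]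
       congr 3 <;> (try rw [Fin.mk.injEq]) <;> omega)

theorem conjTranspose_Wso_mul_Wso (N : ℕ) (z : Fin (N / 2) → ℂ) :
    (Wso N z)ᴴ * Wso N z = Matrix.diagonal fun i : Fin N => (padNormSq z ((i : ℕ) / 2) : ℂ) := by
  ext i k
  simp only [Matrix.mul_apply, Matrix.conjTranspose_apply, star_Wso_mul_Wso]
  by_cases hik : i = k
  · subst hik
    simp only [true_and, Matrix.diagonal_apply_eq]
    rw [Fin.sum_univ_eq_sum_range (fun j => if j = _ then _ else 0), Finset.sum_ite_eq']
    simp only [Finset.mem_range, ite_eq_left_iff]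
    intro h
    have := i.isLt
    rw [padNormSq_of_le z (by split_ifs at h <;> omega), Complex.ofReal_zero]
  · simp [hik]

theorem prod_one_add_padNormSq (N : ℕ) (z : Fin (N / 2) → ℂ) :
    ∏ i : Fin N, (1 + padNormSq z ((i : ℕ) / 2)) = ∏ j, (1 + Complex.normSq (z j)) ^ 2 := by
  rw [Fin.prod_univ_eq_prod_range (fun n => 1 + padNormSq z (n / 2)),
    Finset.prod_range_div_two (fun n => 1 + padNormSq z n),
    padNormSq_of_le z le_rfl, add_zero, one_pow, mul_one,
    ← Fin.prod_univ_eq_prod_range (fun n => (1 + padNormSq z n) ^ 2)]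
  simp [padNormSq]

theorem det_one_add_conjTranspose_Wso_mul_Wso (N : ℕ) (z : Fin (N / 2) → ℂ) :
    ((1 : Matrix (Fin N) (Fin N) ℂ) + (Wso N z)ᴴ * Wso N z).det =
      ((∏ j, (1 + Complex.normSq (z j)) ^ 2 : ℝ) : ℂ) := by
  rw [conjTranspose_Wso_mul_Wso, ← Matrix.diagonal_one, Matrix.diagonal_add, Matrix.det_diagonal,
    ← prod_one_add_padNormSq]
  push_cast
  rfl

theorem det_one_add_Wso_general (N : ℕ) (z : Fin (N / 2) → ℂ) :
    (Wso N z)ᵀ = -Wso N z ∧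
    ((1 : Matrix (Fin N) (Fin N) ℂ) + (Wso N z)ᴴ * Wso N z).det =
      ∏ j, ((1 + Complex.normSq (z j) : ℝ) : ℂ) ^ 2 ∧
    Real.log (((1 : Matrix (Fin N) (Fin N) ℂ) + (Wso N z)ᴴ * Wso N z).det.re) =
      2 * ∑ j, Real.log (1 + Complex.normSq (z j)) := by
  have hdet := det_one_add_conjTranspose_Wso_mul_Wso N z
  refine ⟨transpose_Wso N z, by rw [hdet]; push_cast; rfl, ?_⟩
  have hpos (j : Fin (N / 2)) : 0 < 1 + Complex.normSq (z j) :=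
    add_pos_of_pos_of_nonneg one_pos (Complex.normSq_nonneg _)
  rw [hdet, Complex.ofReal_re, Real.log_prod fun j _ => (pow_pos (hpos j) 2).ne', Finset.mul_sum]
  simp only [Real.log_pow, Nat.cast_ofNat]

/-- `W(z)` is skew-symmetric, `det(I_N + \bar W(z)ᵀ W(z)) = ∏ (1 + |z_j|²)²`,
and hence `log det(I_N + \bar W(z)ᵀ W(z)) = 2 ∑ log(1 + |z_j|²)`: the map `z ↦ W(z)` pulls
back the Kähler–Einstein potential of `SO(2N)/U(N)` to twice the product Fubini–Study
potential of `(ℂP¹)^{⌊N/2⌋}`. -/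
theorem det_one_add_Wso (N : ℕ) (hN : 2 ≤ N) (z : Fin (N / 2) → ℂ) :
    (Wso N z)ᵀ = -Wso N z ∧
    ((1 : Matrix (Fin N) (Fin N) ℂ) + (Wso N z)ᴴ * Wso N z).det =
      ∏ j, ((1 + Complex.normSq (z j) : ℝ) : ℂ) ^ 2 ∧
    Real.log (((1 : Matrix (Fin N) (Fin N) ℂ) + (Wso N z)ᴴ * Wso N z).det.re) =
      2 * ∑ j, Real.log (1 + Complex.normSq (z j)) :=
  det_one_add_Wso_general N z
end

section
/- Let N ≥ 4 and consider the function G(v, v', u) = 1 + Σ_{j=2}^N |v_j|² + Σ_{j=2}^N |v'_j|² + |u|² + 4|Σ_{j=2}^N v_j v'_j − u²|² on ℂ^{2N−1}. Under the substitution v₂ = z₁/√2, v₃ = z₂/√2, v_j = 0 for j ≥ 4, v'₂ = 0, v'₃ = z₁/√2, v'₄ = z₂/√2, v'_j = 0 for j ≥ 5, u = 0, one has G(v(z), v'(z), 0) = (1+|z₁|²)(1+|z₂|²). -/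
/-- The substitution `v₂ = z₁/√2, v₃ = z₂/√2, v_j = 0 (j ≥ 4)`, indexed by `j − 2` over
`Fin (N−1)` (so `j` runs over `2, …, N`). -/
noncomputable def vQuad (N : ℕ) (z₁ z₂ : ℂ) : Fin (N - 1) → ℂ := fun j =>
  if (j : ℕ) = 0 then z₁ / (Real.sqrt 2 : ℂ)
  else if (j : ℕ) = 1 then z₂ / (Real.sqrt 2 : ℂ) else 0

/-- The substitution `v'₂ = 0, v'₃ = z₁/√2, v'₄ = z₂/√2, v'_j = 0 (j ≥ 5)`. -/
noncomputable def vQuad' (N : ℕ) (z₁ z₂ : ℂ) : Fin (N - 1) → ℂ := fun j =>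
  if (j : ℕ) = 1 then z₁ / (Real.sqrt 2 : ℂ)
  else if (j : ℕ) = 2 then z₂ / (Real.sqrt 2 : ℂ) else 0

private lemma sum_aux {M : Type*} [AddCommMonoid M] (n : ℕ) (hn : 3 ≤ n) (f : ℕ → M)
    (hf : ∀ i, 3 ≤ i → f i = 0) :
    ∑ j : Fin n, f (j : ℕ) = f 0 + f 1 + f 2 := by
  rw [Fin.sum_univ_eq_sum_range]
  rw [← Finset.sum_subset (Finset.range_subset_range.2 hn)
    (fun x _ hx => hf x (by simpa using hx))]
  simp [Finset.sum_range_succ]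

private lemma sqrt2_sq : ((Real.sqrt 2 : ℝ) : ℂ) * ((Real.sqrt 2 : ℝ) : ℂ) = 2 := by
  rw [← Complex.ofReal_mul, Real.mul_self_sqrt (by norm_num)]
  norm_num

/-- along the stated linear embedding of `ℂ²` (with `u = 0`), the argument
`G(v, v', u) = 1 + ∑|v_j|² + ∑|v'_j|² + |u|² + 4|∑ v_j v'_j − u²|²` of the Kähler–Einstein
potential of the odd quadric `SO(2N+1)/(SO(2N−1) × SO(2))` restricts to
`(1 + |z₁|²)(1 + |z₂|²)`. -/
theorem odd_quadric_potential_restricts (N : ℕ) (hN : 4 ≤ N) (z₁ z₂ : ℂ) :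
    1 + (∑ j, Complex.normSq (vQuad N z₁ z₂ j)) +
        (∑ j, Complex.normSq (vQuad' N z₁ z₂ j)) + Complex.normSq (0 : ℂ) +
        4 * Complex.normSq ((∑ j, vQuad N z₁ z₂ j * vQuad' N z₁ z₂ j) - (0 : ℂ) ^ 2) =
      (1 + Complex.normSq z₁) * (1 + Complex.normSq z₂) := by
  have hn : 3 ≤ N - 1 := by omega
  have h1 : ∑ j, Complex.normSq (vQuad N z₁ z₂ j) =
      Complex.normSq z₁ / 2 + Complex.normSq z₂ / 2 := by
    refine (sum_aux (N-1) hn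
      (fun i : ℕ => Complex.normSq (if i = 0 then z₁ / (Real.sqrt 2 : ℂ)
        else if i = 1 then z₂ / (Real.sqrt 2 : ℂ) else 0))
      (fun i hi => by beta_reduce; rw [if_neg (by omega), if_neg (by omega)]; simp)).trans ?_
    simp only []
    norm_num
  have h2 : ∑ j, Complex.normSq (vQuad' N z₁ z₂ j) =
      Complex.normSq z₁ / 2 + Complex.normSq z₂ / 2 := by
    refine (sum_aux (N-1) hn
      (fun i : ℕ => Complex.normSq (if i = 1 then z₁ / (Real.sqrt 2 : ℂ)
        else if i = 2 then z₂ / (Real.sqrt 2 : ℂ) else 0))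
      (fun i hi => by beta_reduce; rw [if_neg (by omega), if_neg (by omega)]; simp)).trans ?_
    simp only []
    norm_num
  have h3 : ∑ j, vQuad N z₁ z₂ j * vQuad' N z₁ z₂ j = z₁ * z₂ / 2 := by
    refine (sum_aux (N-1) hn
      (fun i : ℕ => (if i = 0 then z₁ / (Real.sqrt 2 : ℂ)
          else if i = 1 then z₂ / (Real.sqrt 2 : ℂ) else 0) *
        (if i = 1 then z₁ / (Real.sqrt 2 : ℂ)
          else if i = 2 then z₂ / (Real.sqrt 2 : ℂ) else 0))
      (fun i hi => by beta_reduce; rw [if_neg (by omega), if_neg (by omega)]; simp)).trans ?_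
    simp only []
    norm_num
    rw [div_mul_div_comm, sqrt2_sq]
    ring
  rw [h1, h2, h3]
  simp [Complex.normSq_div, Complex.normSq_mul]
  ring
end
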